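/- For each integer n ≥ 0, the classical Bernoulli number satisfies B_n = Σ_{j=0}^{n} (−1)^j · (C(n+1, j+1)/C(n+j, j)) · S(n+j, j), where S denotes Stirling numbers of the second kind. -/

import Mathlib

open Finset

/-- Stirling numbers of the second kind `S(n,k)`. -/
def stirling : ℕ → ℕ → ℕ
  | 0, 0 => 1
  | 0, _ + 1 => 0
  | _ + 1, 0 => 0
  | n + 1, k + 1 => (k + 1) * stirling n (k + 1) + stirling n k

/-!
Put `E(t) = (e^t - 1)/t`, so that `t/(e^t - 1) = 1/E`. The exponential generating function
`Σ_m S(m, j) t^m/m! = (e^t - 1)^j/j!` turns `S(n + j, j)/C(n + j, j)` into `n! [t^n] E^j`.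
Since `t ∣ 1 - E`, the identity `1 - (1 - E)^(n+1) = E · Σ_j (-1)^j C(n+1, j+1) E^j` shows that
`Σ_j (-1)^j C(n+1, j+1) E^j` agrees with `1/E` up to order `t^n`.
-/

open PowerSeries Nat

theorem stirling_eq_stirlingSecond : stirling = stirlingSecond := by
  funext n k
  induction n generalizing k with
  | zero => cases k <;> rfl
  | succ n ih => cases k <;> simp [stirling, stirlingSecond_succ_succ, ih]

theorem one_sub_one_sub_pow_succ {R : Type*} [CommRing R] (x : R) (n : ℕ) :
    1 - (1 - x) ^ (n + 1) =
      x * ∑ j ∈ range (n + 1), (-1) ^ j * ((n + 1).choose (j + 1) : R) * x ^ j := by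
  rw [show 1 - x = -x + 1 by ring, add_pow, sum_range_succ', mul_sum]
  simp only [one_pow, mul_one, pow_zero, Nat.choose_zero_right, Nat.cast_one]
  rw [sub_add_cancel_right, ← sum_neg_distrib]
  refine sum_congr rfl fun j _ => ?_
  ring

namespace PowerSeries

section ExpSubOne

variable {A : Type*} [CommRing A] [Algebra ℚ A]

/-- Differentiating `(e^t - 1)^(j+1)` gives `(j + 1)((e^t - 1)^(j+1) + (e^t - 1)^j)`, which on
coefficients is the recurrence of `stirlingSecond`. -/
theorem factorial_mul_coeff_exp_sub_one_pow (m j : ℕ) :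
    (m ! : A) * coeff m ((exp A - 1) ^ j) = j ! * stirlingSecond m j := by
  induction m generalizing j with
  | zero => cases j <;> simp [coeff_zero_eq_constantCoeff]
  | succ m ih =>
    cases j with
    | zero => simp [coeff_one]
    | succ j =>
      have hderiv : d⁄dX A ((exp A - 1) ^ (j + 1)) =
          (j + 1) • ((exp A - 1) ^ (j + 1) + (exp A - 1) ^ j) := by
        rw [derivative_pow, map_sub, derivative_exp A, derivative_one, Nat.add_sub_cancel,
          nsmul_eq_mul]
        push_cast
        ring
      have hcoeff := congrArg (coeff m) hderiv
      rw [coeff_derivative, map_nsmul, map_add, nsmul_eq_mul] at hcoeff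
      calc ((m + 1) ! : A) * coeff (m + 1) ((exp A - 1) ^ (j + 1))
          = m ! * (coeff (m + 1) ((exp A - 1) ^ (j + 1)) * (m + 1)) := by
            push_cast [factorial_succ]; ring
        _ = (j + 1) *
              (m ! * coeff m ((exp A - 1) ^ (j + 1)) + m ! * coeff m ((exp A - 1) ^ j)) := by
            rw [hcoeff]; push_cast; ring
        _ = (j + 1) * ((j + 1) ! * stirlingSecond m (j + 1) + j ! * stirlingSecond m j) := by
            rw [ih, ih]
        _ = (j + 1) ! * stirlingSecond (m + 1) (j + 1) := by
            rw [stirlingSecond_succ_succ]; push_cast [factorial_succ]; ring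

theorem bernoulliPowerSeries_mul_eq_one {E : A⟦X⟧} (hE : exp A - 1 = X * E) :
    bernoulliPowerSeries A * E = 1 :=
  X_mul_cancel (by rw [mul_left_comm, ← hE, bernoulliPowerSeries_mul_exp_sub_one, mul_one])

end ExpSubOne

theorem stirlingSecond_div_choose_eq_coeff_pow {K : Type*} [Field K] [CharZero K] {E : K⟦X⟧}
    (hE : exp K - 1 = X * E) (n j : ℕ) :
    (stirlingSecond (n + j) j : K) / (n + j).choose j = n ! * coeff n (E ^ j) := by
  have h := factorial_mul_coeff_exp_sub_one_pow (A := K) (n + j) j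
  rw [hE, mul_pow, coeff_X_pow_mul', if_pos (Nat.le_add_left j n), Nat.add_sub_cancel] at h
  have hc : coeff n (E ^ j) = j ! * stirlingSecond (n + j) j / (n + j)! := by
    rw [eq_div_iff (Nat.cast_ne_zero.mpr (factorial_ne_zero _))]
    linear_combination h
  rw [Nat.cast_choose K (Nat.le_add_left j n), Nat.add_sub_cancel, hc]
  field_simp

theorem coeff_eq_sum_choose_mul_coeff_pow {R : Type*} [CommRing R] {f E : R⟦X⟧} (h : f * E = 1)
    (hE : constantCoeff E = 1) (n : ℕ) :
    coeff n f =
      ∑ j ∈ range (n + 1), (-1) ^ j * ((n + 1).choose (j + 1) : R) * coeff n (E ^ j) := by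
  have hdvd : X ^ (n + 1) ∣ (1 - E) ^ (n + 1) :=
    pow_dvd_pow_of_dvd (X_dvd_iff.mpr (by simp [hE])) _
  have hsum : ∑ j ∈ range (n + 1), C ((-1) ^ j * ((n + 1).choose (j + 1) : R)) * E ^ j =
      f - f * (1 - E) ^ (n + 1) := by
    rw [← mul_one_sub, one_sub_one_sub_pow_succ, ← mul_assoc, h, one_mul]
    simp
  have htail : coeff n (f * (1 - E) ^ (n + 1)) = 0 :=
    X_pow_dvd_iff.mp (dvd_mul_of_dvd_right hdvd f) n (lt_add_one n)
  rw [← sub_zero (coeff n f), ← htail, ← map_sub, ← hsum, map_sum]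
  simp only [coeff_C_mul]

end PowerSeries

theorem bernoulli_closed_form (n : ℕ) :
    bernoulli n =
      ∑ j ∈ Finset.range (n + 1),
        (-1 : ℚ) ^ j * (((n + 1).choose (j + 1) : ℚ) / ((n + j).choose j : ℚ)) *
          (stirling (n + j) j : ℚ) := by
  obtain ⟨E, hE⟩ : X ∣ exp ℚ - 1 := X_dvd_iff.mpr (by simp)
  have hBE := bernoulliPowerSeries_mul_eq_one hE
  have hE₀ : constantCoeff E = 1 := by
    simpa [bernoulliPowerSeries] using congrArg constantCoeff hBE
  have hB : bernoulli n = n ! * coeff n (bernoulliPowerSeries ℚ) := by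
    simp [bernoulliPowerSeries, mul_div_cancel₀ _ (show (n ! : ℚ) ≠ 0 by positivity)]
  rw [hB, coeff_eq_sum_choose_mul_coeff_pow hBE hE₀, mul_sum]
  refine sum_congr rfl fun j _ => ?_
  rw [stirling_eq_stirlingSecond]
  linear_combination
    (-(-1) ^ j * ((n + 1).choose (j + 1) : ℚ)) * stirlingSecond_div_choose_eq_coeff_pow hE n j
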